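/- Let 0 < α ≤ 1, K ≥ 0 and f ∈ Σ(α,K). Then for every l ∈ ℕ and every 0 ≤ k < 2^l, the Haar coefficient satisfies |∫₀¹ f(x) ψ_{l,k}(x) dx| ≤ K * 2^{−l(α + 1/2)}. -/

import Mathlib

/-!
On `[0,1)` the wavelet `ψ_{l,k}` is `2^{l/2}` times the indicator of the right half minus the
indicator of the left half of the dyadic interval `[k 2^{-l}, (k+1) 2^{-l})`. Translating the
right half by its width `h = 2^{-(l+1)}` onto the left half, the coefficient becomes
`2^{l/2} ∫_{left half} (f(x+h) - f(x)) dx`, and each increment is at most `K h^α`, so the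
coefficient is at most `2^{l/2} K h^{α+1} ≤ K 2^{-l(α+1/2)}`.
-/

open MeasureTheory

/-- The Haar wavelet `ψ_{l,k}(x) = 2^{l/2} (1_{[1/2,1)} - 1_{[0,1/2)})(2^l x - k)`. -/
noncomputable def haar (l k : ℕ) (x : ℝ) : ℝ :=
  2 ^ ((l : ℝ) / 2) *
    ((Set.Ico (1 / 2 : ℝ) 1).indicator 1 (2 ^ l * x - k) -
     (Set.Ico (0 : ℝ) (1 / 2 : ℝ)).indicator 1 (2 ^ l * x - k))

open Set
open scoped NNReal ENNReal

theorem holderOnWith_of_dist_le {X Y : Type*} [PseudoMetricSpace X] [PseudoMetricSpace Y]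
    {f : X → Y} {s : Set X} {K α : ℝ} (hK : 0 ≤ K) (hα : 0 ≤ α)
    (hf : ∀ x ∈ s, ∀ y ∈ s, dist (f x) (f y) ≤ K * dist x y ^ α) :
    HolderOnWith ⟨K, hK⟩ ⟨α, hα⟩ f s := by
  intro x hx y hy
  calc edist (f x) (f y) = ENNReal.ofReal (dist (f x) (f y)) := edist_dist _ _
    _ ≤ ENNReal.ofReal (K * dist x y ^ α) := ENNReal.ofReal_le_ofReal (hf x hx y hy)
    _ = _ := by
      rw [ENNReal.ofReal_mul hK, ← ENNReal.ofReal_rpow_of_nonneg dist_nonneg hα, edist_dist,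
        ENNReal.ofReal_eq_coe_nnreal hK]
      rfl

theorem HolderOnWith.integrableOn {X E : Type*} [PseudoMetricSpace X] [MeasurableSpace X]
    [OpensMeasurableSpace X] [NormedAddCommGroup E] [SecondCountableTopologyEither X E]
    {μ : Measure X} {C r : ℝ≥0} {f : X → E} {s : Set X} (hf : HolderOnWith C r f s)
    (hr : 0 < r) (hs : Bornology.IsBounded s) (hsm : MeasurableSet s) (hμ : μ s ≠ ∞) :
    IntegrableOn f s μ := by
  have hbdd : Bornology.IsBounded (f '' s) := by
    rw [Metric.isBounded_iff_ediam_ne_top] at hs ⊢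
    exact (hf.ediam_image_le.trans_lt (ENNReal.mul_lt_top ENNReal.coe_lt_top
      (ENNReal.rpow_lt_top_of_nonneg r.coe_nonneg hs))).ne
  obtain ⟨M, hM⟩ := hbdd.exists_norm_le
  exact ⟨(hf.continuousOn hr).aestronglyMeasurable hsm, .restrict_of_bounded (C := M) hμ.lt_top
    ((ae_restrict_iff' hsm).2 (.of_forall fun x hx => hM _ (mem_image_of_mem f hx)))⟩

theorem abs_setIntegral_Ico_sub_setIntegral_Ico_le {f : ℝ → ℝ} {C r : ℝ≥0} {a b c : ℝ}
    (hf : HolderOnWith C r f (Ico a c)) (hr : 0 < r) (hab : a ≤ b) (hbc : c - b = b - a) :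
    |(∫ x in Ico b c, f x) - ∫ x in Ico a b, f x| ≤ C * (b - a) ^ (r : ℝ) * (b - a) := by
  set h := b - a with hh
  have hshift : (fun x => x + h) ⁻¹' Ico b c = Ico a b := by
    rw [preimage_add_const_Ico, show b - h = a by ring, show c - h = b by linarith]
  have hmp := measurePreserving_add_right (volume : Measure ℝ) h
  have hemb := measurableEmbedding_addRight (G := ℝ) h
  have hint : IntegrableOn f (Ico a c) :=
    hf.integrableOn hr (Metric.isBounded_Ico a c) measurableSet_Ico measure_Ico_lt_top.ne
  have hintL : IntegrableOn f (Ico a b) := hint.mono_set (Ico_subset_Ico_right (by linarith))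
  have hintR : IntegrableOn (fun x => f (x + h)) (Ico a b) := by
    rw [← hshift]
    exact (hmp.integrableOn_comp_preimage hemb).2 (hint.mono_set (Ico_subset_Ico_left hab))
  have hincr : ∀ x ∈ Ico a b, ‖f (x + h) - f x‖ ≤ C * h ^ (r : ℝ) := by
    intro x hx
    have hxh : x + h ∈ Ico a c := ⟨by linarith [hx.1], by linarith [hx.2]⟩
    have hx' : x ∈ Ico a c := ⟨hx.1, by linarith [hx.2]⟩
    simpa [← dist_eq_norm, Real.dist_eq, abs_of_nonneg (sub_nonneg.2 hab), hh]
      using hf.dist_le hxh hx'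
  calc |(∫ x in Ico b c, f x) - ∫ x in Ico a b, f x|
      = ‖∫ x in Ico a b, (f (x + h) - f x)‖ := by
        rw [← hmp.setIntegral_preimage_emb hemb, hshift, integral_sub hintR hintL,
          Real.norm_eq_abs]
    _ ≤ C * h ^ (r : ℝ) * volume.real (Ico a b) :=
        norm_setIntegral_le_of_norm_le_const measure_Ico_lt_top hincr
    _ = C * h ^ (r : ℝ) * h := by rw [Real.volume_real_Ico_of_le hab]

theorem haar_eq_indicator (l k : ℕ) (x : ℝ) :
    haar l k x = 2 ^ ((l : ℝ) / 2) *
      ((Ico (((k : ℝ) + 1 / 2) / 2 ^ l) ((k + 1) / 2 ^ l)).indicator 1 x -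
        (Ico ((k : ℝ) / 2 ^ l) ((k + 1 / 2) / 2 ^ l)).indicator 1 x) := by
  have hpre : ∀ p q : ℝ, (Ico p q).indicator (1 : ℝ → ℝ) (2 ^ l * x - k) =
      (Ico ((k + p) / 2 ^ l) ((k + q) / 2 ^ l)).indicator 1 x := by
    intro p q
    have hcomp : (fun x : ℝ => 2 ^ l * x - k) = (fun y : ℝ => y - k) ∘ (2 ^ l * ·) := rfl
    rw [← indicator_comp_right (fun x : ℝ => 2 ^ l * x - k), hcomp, preimage_comp,
      preimage_sub_const_Ico, preimage_const_mul_Ico₀ _ _ (by positivity), add_comm p, add_comm q]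
    rfl
  rw [haar, hpre, hpre, add_zero]

theorem Ico_div_two_pow_subset_Ico {l k : ℕ} (hk : k < 2 ^ l) :
    Ico ((k : ℝ) / 2 ^ l) ((k + 1) / 2 ^ l) ⊆ Ico 0 1 := by
  have hk' : (k : ℝ) + 1 ≤ 2 ^ l := by exact_mod_cast hk
  exact Ico_subset_Ico (by positivity) ((div_le_one (by positivity)).2 hk')

theorem setIntegral_mul_haar {f : ℝ → ℝ} (hf : IntegrableOn f (Ico 0 1)) {l k : ℕ}
    (hk : k < 2 ^ l) :
    ∫ x in Ico (0 : ℝ) 1, f x * haar l k x = 2 ^ ((l : ℝ) / 2) *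
      ((∫ x in Ico (((k : ℝ) + 1 / 2) / 2 ^ l) ((k + 1) / 2 ^ l), f x) -
        ∫ x in Ico ((k : ℝ) / 2 ^ l) ((k + 1 / 2) / 2 ^ l), f x) := by
  set R := Ico (((k : ℝ) + 1 / 2) / 2 ^ l) ((k + 1) / 2 ^ l)
  set L := Ico ((k : ℝ) / 2 ^ l) ((k + 1 / 2) / 2 ^ l)
  have hmid : ((k : ℝ) + 1 / 2) / 2 ^ l ∈ Icc ((k : ℝ) / 2 ^ l) ((k + 1) / 2 ^ l) :=
    ⟨by gcongr; linarith, by gcongr; linarith⟩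
  have hR : R ⊆ Ico 0 1 := (Ico_subset_Ico_left hmid.1).trans (Ico_div_two_pow_subset_Ico hk)
  have hL : L ⊆ Ico 0 1 := (Ico_subset_Ico_right hmid.2).trans (Ico_div_two_pow_subset_Ico hk)
  have hintegrand : (fun x => f x * haar l k x) =
      fun x => 2 ^ ((l : ℝ) / 2) * (R.indicator f x - L.indicator f x) := by
    ext x
    simp only [haar_eq_indicator, indicator_apply, Pi.one_apply]
    split_ifs <;> ring
  rw [hintegrand, integral_const_mul, integral_sub, setIntegral_indicator measurableSet_Ico,
    setIntegral_indicator measurableSet_Ico, inter_eq_right.2 hR, inter_eq_right.2 hL]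
  · exact ((hf.mono_set hR).integrable_indicator measurableSet_Ico).restrict
  · exact ((hf.mono_set hL).integrable_indicator measurableSet_Ico).restrict

theorem two_rpow_mul_inv_two_pow_rpow_le (l : ℕ) {α : ℝ} (hα : -1 ≤ α) :
    (2 : ℝ) ^ ((l : ℝ) / 2) * (((2 : ℝ) ^ (l + 1))⁻¹ ^ α * ((2 : ℝ) ^ (l + 1))⁻¹) ≤
      2 ^ (-(l : ℝ) * (α + 1 / 2)) := by
  have hpow : ((2 : ℝ) ^ (l + 1))⁻¹ = 2 ^ (-((l : ℝ) + 1)) := by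
    rw [Real.rpow_neg zero_le_two, ← Real.rpow_natCast]
    push_cast
    rfl
  rw [hpow, ← Real.rpow_mul zero_le_two, ← Real.rpow_add two_pos, ← Real.rpow_add two_pos]
  exact Real.rpow_le_rpow_of_exponent_le one_le_two (by nlinarith)

theorem stmt_3 (α K : ℝ) (hα : 0 < α) (hK : 0 ≤ K) (f : ℝ → ℝ)
    (hf : ∀ x ∈ Set.Ico (0 : ℝ) 1, ∀ y ∈ Set.Ico (0 : ℝ) 1, |f x - f y| ≤ K * |x - y| ^ α)
    (l k : ℕ) (hk : k < 2 ^ l) :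
    |∫ x in Set.Ico (0 : ℝ) 1, f x * haar l k x| ≤ K * 2 ^ (-(l : ℝ) * (α + 1 / 2)) := by
  have hHolder : HolderOnWith ⟨K, hK⟩ ⟨α, hα.le⟩ f (Ico 0 1) :=
    holderOnWith_of_dist_le hK hα.le (by simpa only [Real.dist_eq] using hf)
  have hwidth : ((k : ℝ) + 1 / 2) / 2 ^ l - k / 2 ^ l = ((2 : ℝ) ^ (l + 1))⁻¹ := by
    field_simp
    ring
  set w : ℝ := ((2 : ℝ) ^ (l + 1))⁻¹
  have hdiff := abs_setIntegral_Ico_sub_setIntegral_Ico_le (b := ((k : ℝ) + 1 / 2) / 2 ^ l)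
    (hHolder.mono (Ico_div_two_pow_subset_Ico hk)) hα (by gcongr; linarith) (by ring)
  rw [hwidth] at hdiff
  rw [setIntegral_mul_haar (hHolder.integrableOn hα (Metric.isBounded_Ico 0 1) measurableSet_Ico
    measure_Ico_lt_top.ne) hk, abs_mul, abs_of_pos (by positivity)]
  calc _ ≤ 2 ^ ((l : ℝ) / 2) * (K * w ^ α * w) := by gcongr; exact hdiff
    _ = K * (2 ^ ((l : ℝ) / 2) * (w ^ α * w)) := by ring
    _ ≤ K * 2 ^ (-(l : ℝ) * (α + 1 / 2)) := by
        gcongr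
        exact two_rpow_mul_inv_two_pow_rpow_le l (by linarith)
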